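/- Fix 0<ε<1, finite-dimensional complex Hilbert spaces ℋ₁ (of dimension d₁) and ℋ₂ (of dimension d₂), an orthonormal basis b of ℋ₂, and a density matrix ρ₁ on ℋ₁. Let R = R(ε/4, d₁) be a radius such that ∫_{‖ψ‖<R} G(ρ)(dψ)‖ψ‖² > 1 − ε/4 for every density matrix ρ on a d₁-dimensional Hilbert space. Then for every bounded measurable function f : 𝕊(ℋ₁) → ℝ, one has the inclusion M(f,ε) ⊇ M̃((f∘P)·1_{N<R}·N², ε/(4R²)) ∩ M̃(1_{N<R}·N², ε/(4R²)), where M(f,ε) = { ψ ∈ ℛ(ρ₁) : |μ₁^{ψ,b}(f) − GAP(ρ₁)(f)| < ε‖f‖_∞ } and M̃(f̃,ε̃) = { ψ ∈ ℛ(ρ₁) : |μ̃₁^{ψ,b}(f̃) − G(ρ₁)(f̃)| < ε̃‖f̃‖_∞ }, N(ψ₁) = ‖ψ₁‖ on ℋ₁, P(ψ₁) = ψ₁/‖ψ₁‖, and (f∘P)·N² is defined to be 0 at ψ₁ = 0. -/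

import Mathlib

open MeasureTheory Matrix
open scoped ENNReal ComplexConjugate ComplexOrder Classical

noncomputable section

namespace GAPPaper

/-- `d`-dimensional complex Hilbert space. -/
abbrev Hsp (d : ℕ) : Type := EuclideanSpace ℂ (Fin d)

/-- The Hilbert space `ℋ₁ ⊗ ℋ₂`. -/
abbrev Hsp2 (d₁ d₂ : ℕ) : Type := EuclideanSpace ℂ (Fin d₁ × Fin d₂)

instance (ι : Type*) : MeasurableSpace (EuclideanSpace ℂ ι) :=
  MeasurableSpace.comap (WithLp.equiv 2 (ι → ℂ)) MeasurableSpace.pi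

instance (m n : Type*) (α : Type*) [MeasurableSpace α] : MeasurableSpace (Matrix m n α) :=
  MeasurableSpace.pi

/-- standard complex Gaussian on ℂ: mean 0, `E|z|² = 1`
(real and imaginary part independent real Gaussians of variance 1/2). -/
def stdCGaussian : Measure ℂ :=
  Measure.map (fun p : ℝ × ℝ => (p.1 : ℂ) + p.2 * Complex.I)
    ((ProbabilityTheory.gaussianReal 0 (1/2)).prod (ProbabilityTheory.gaussianReal 0 (1/2)))

/-- standard complex Gaussian on `EuclideanSpace ℂ ι` (covariance = identity). -/
def stdGaussian (ι : Type*) [Fintype ι] : Measure (EuclideanSpace ℂ ι) :=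
  Measure.map (⇑(WithLp.equiv 2 (ι → ℂ)).symm)
    (Measure.pi fun _ : ι => stdCGaussian)

/-- the positive semidefinite square root (the old `Matrix.PosSemidef.sqrt`). -/
def posSemidefSqrt {n : Type*} [Fintype n] [DecidableEq n] {A : Matrix n n ℂ}
    (hA : A.PosSemidef) : Matrix n n ℂ :=
  (hA.1.eigenvectorUnitary : Matrix n n ℂ) *
    diagonal (fun i => ((Real.sqrt (hA.1.eigenvalues i) : ℝ) : ℂ)) *
    (star hA.1.eigenvectorUnitary : Matrix n n ℂ)

/-- The Gaussian measure `G(ρ)` on `ℂ^d` with mean 0 and covariance `ρ`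
(the image of the standard Gaussian under `√ρ`). -/
def gaussian {d : ℕ} (ρ : Matrix (Fin d) (Fin d) ℂ) : Measure (Hsp d) :=
  if h : ρ.PosSemidef then
    Measure.map
      (fun x => (WithLp.equiv 2 (Fin d → ℂ)).symm
        ((posSemidefSqrt h).mulVec (WithLp.equiv 2 (Fin d → ℂ) x)))
      (stdGaussian (Fin d))
  else 0

/-- the "adjust" operation `Aμ(dψ) = ‖ψ‖² μ(dψ)`. -/
def adjust {E : Type*} [NormedAddCommGroup E] [MeasurableSpace E] (μ : Measure E) :
    Measure E :=
  μ.withDensity fun ψ => ENNReal.ofReal (‖ψ‖ ^ 2)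

/-- projection to the unit sphere, `P(ψ) = ψ/‖ψ‖` (defined as `0` at `0`). -/
def nrm {E : Type*} [NormedAddCommGroup E] [NormedSpace ℝ E] (ψ : E) : E := ‖ψ‖⁻¹ • ψ

/-- the measure `GAP(ρ) = P_*(A G(ρ))`. -/
def GAPm {d : ℕ} (ρ : Matrix (Fin d) (Fin d) ℂ) : Measure (Hsp d) :=
  Measure.map nrm (adjust (gaussian ρ))

/-- partial inner product `⟨χ|ψ⟩ ∈ ℋ₁`, for `χ ∈ ℋ₂`, `ψ ∈ ℋ₁⊗ℋ₂`. -/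
def partialInner {d₁ d₂ : ℕ} (χ : Hsp d₂) (ψ : Hsp2 d₁ d₂) : Hsp d₁ :=
  (WithLp.equiv 2 (Fin d₁ → ℂ)).symm fun i =>
    ∑ k : Fin d₂, conj (WithLp.equiv 2 (Fin d₂ → ℂ) χ k) *
      WithLp.equiv 2 (Fin d₁ × Fin d₂ → ℂ) ψ (i, k)

/-- the distribution `μ₁^{ψ,b} = ∑_j ‖⟨b_j|ψ⟩‖² δ_{⟨b_j|ψ⟩/‖⟨b_j|ψ⟩‖}`
of the conditional wave function (a measure concentrated on `𝕊(ℋ₁)`). -/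
def condMeasure {d₁ d₂ : ℕ} (ψ : Hsp2 d₁ d₂) (b : Fin d₂ → Hsp d₂) :
    Measure (Hsp d₁) :=
  ∑ j : Fin d₂, ((‖partialInner (b j) ψ‖₊ : ℝ≥0∞) ^ 2) •
    Measure.dirac (nrm (partialInner (b j) ψ))

/-- the distribution `μ̃₁^{ψ,b} = (1/d₂) ∑_j δ_{√d₂ ⟨b_j|ψ⟩}` of the non-normalized
conditional wave function `√d₂ ⟨b_J|ψ⟩`, `J` uniform in `{1,…,d₂}`. -/
def tildeMu {d₁ d₂ : ℕ} (ψ : Hsp2 d₁ d₂) (b : Fin d₂ → Hsp d₂) :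
    Measure (Hsp d₁) :=
  ((d₂ : ℝ≥0∞))⁻¹ • ∑ j : Fin d₂, Measure.dirac (Real.sqrt d₂ • partialInner (b j) ψ)

/-- the reduced density matrix `ρ₁^ψ = tr₂ |ψ⟩⟨ψ|`. -/
def redMatrix {d₁ d₂ : ℕ} (ψ : Hsp2 d₁ d₂) : Matrix (Fin d₁) (Fin d₁) ℂ :=
  Matrix.of fun i i' =>
    ∑ k : Fin d₂, WithLp.equiv 2 (Fin d₁ × Fin d₂ → ℂ) ψ (i, k) *
      conj (WithLp.equiv 2 (Fin d₁ × Fin d₂ → ℂ) ψ (i', k))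

/-- sup norm `‖f‖_∞` of a function viewed as a function on the unit sphere `𝕊(ℋ)`. -/
def sphereSup {d : ℕ} (f : Hsp d → ℝ) : ℝ :=
  ⨆ ψ : Metric.sphere (0 : Hsp d) 1, |f ψ|

/-- sup norm `‖f‖_∞` over the whole space. -/
def supNorm {α : Type*} (f : α → ℝ) : ℝ := ⨆ x, |f x|

/-- the trace norm `‖M‖_tr = tr √(M^* M)`. -/
def traceNorm {n : Type*} [Fintype n] [DecidableEq n] (M : Matrix n n ℂ) : ℝ :=
  (posSemidefSqrt (Matrix.posSemidef_conjTranspose_mul_self M)).trace.re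

/-- partial trace over the second factor. -/
def ptrace {d₁ d₂ : ℕ} (M : Matrix (Fin d₁ × Fin d₂) (Fin d₁ × Fin d₂) ℂ) :
    Matrix (Fin d₁) (Fin d₁) ℂ :=
  Matrix.of fun i i' => ∑ k : Fin d₂, M (i, k) (i', k)

/-- the matrix of the orthogonal projection onto a subspace `K`. -/
def projMatrix {ι : Type*} [Fintype ι] [DecidableEq ι]
    (K : Submodule ℂ (EuclideanSpace ℂ ι)) : Matrix ι ι ℂ :=
  Matrix.of fun i j =>
    (inner ℂ (EuclideanSpace.single i (1:ℂ))
      ((K.orthogonalProjectionOnto (EuclideanSpace.single j (1:ℂ)) : EuclideanSpace ℂ ι)) : ℂ)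

/-- the micro-canonical density matrix `ρ_R`: `1/dim K` times the projection onto `K`. -/
def rhoR {ι : Type*} [Fintype ι] [DecidableEq ι]
    (K : Submodule ℂ (EuclideanSpace ℂ ι)) : Matrix ι ι ℂ :=
  ((Module.finrank ℂ K : ℂ))⁻¹ • projMatrix K

/-- the normalized uniform measure `u_R` on the unit sphere of the subspace `K`
(realized as a measure on the ambient space, concentrated on `𝕊(K)`:
the image of a standard Gaussian under `x ↦ P_K x/‖P_K x‖`). -/
def uR {ι : Type*} [Fintype ι] (K : Submodule ℂ (EuclideanSpace ℂ ι)) :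
    Measure (EuclideanSpace ℂ ι) :=
  Measure.map (fun x => nrm ((K.orthogonalProjectionOnto x : EuclideanSpace ℂ ι)))
    (stdGaussian ι)

/-- the normalized uniform measure on the unit sphere `𝕊(ℂ^d)`. -/
def sphereUniform (d : ℕ) : Measure (Hsp d) :=
  Measure.map nrm (stdGaussian (Fin d))

/-- the unitary group `U(n)`. -/
abbrev UG (n : ℕ) : Type := Matrix.unitaryGroup (Fin n) ℂ

/-- `μU` is the Haar (probability) measure on the compact Polish group `U(n)`:
a left-invariant Borel probability measure (this characterizes Haar measure uniquely). -/
def IsHaar {n : ℕ} (μU : Measure (UG n)) : Prop :=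
  IsProbabilityMeasure μU ∧ ∀ V : UG n, Measure.map (fun U => V * U) μU = μU

/-- the `j`-th column of a unitary matrix, as a vector in `ℂ^n`. -/
def col {n : ℕ} (U : UG n) (j : Fin n) : Hsp n :=
  (WithLp.equiv 2 (Fin n → ℂ)).symm fun k => (U : Matrix (Fin n) (Fin n) ℂ) k j

/-- the orthonormal basis of `ℂ^n` formed by the columns of a unitary matrix; pushing
Haar measure forward along this map yields the uniform measure `u_ONB` on `ONB(ℋ₂)`. -/
def colBasis {n : ℕ} (U : UG n) : Fin n → Hsp n := fun j => col U j

/-- elementary tensor `x ⊗ y ∈ ℋ₁⊗ℋ₂`. -/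
def tensor {d₁ d₂ : ℕ} (x : Hsp d₁) (y : Hsp d₂) : Hsp2 d₁ d₂ :=
  (WithLp.equiv 2 (Fin d₁ × Fin d₂ → ℂ)).symm fun p =>
    WithLp.equiv 2 (Fin d₁ → ℂ) x p.1 * WithLp.equiv 2 (Fin d₂ → ℂ) y p.2

/-- the set `ℛ(ρ₁)` of unit vectors in `ℋ₁⊗ℋ₂` with reduced density matrix `ρ₁`. -/
def Rset (d₁ d₂ : ℕ) (ρ₁ : Matrix (Fin d₁) (Fin d₁) ℂ) : Set (Hsp2 d₁ d₂) :=
  {ψ | ‖ψ‖ = 1 ∧ redMatrix ψ = ρ₁}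

/-- the uniform distribution `u_{ρ₁}` on `ℛ(ρ₁)`: the image, under the map
`{φ_i} ↦ ∑_i √p_i χ_i ⊗ φ_i` (with `{χ_i}` an eigenbasis of `ρ₁`, `p_i` the eigenvalues,
and `{φ_i}` the first `d₁` columns of a Haar-distributed unitary `U`), of Haar measure `μU`. -/
def uRho {d₁ d₂ : ℕ} (ρ₁ : Matrix (Fin d₁) (Fin d₁) ℂ) (μU : Measure (UG d₂)) :
    Measure (Hsp2 d₁ d₂) :=
  if h : ρ₁.IsHermitian ∧ d₁ ≤ d₂ then
    Measure.map (fun U : UG d₂ =>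
      ∑ i : Fin d₁, Real.sqrt (h.1.eigenvalues i) •
        tensor (h.1.eigenvectorBasis i) (col U (Fin.castLE h.2 i))) μU
  else 0

/-- `ρ` is a density matrix: positive semidefinite with trace 1. -/
def IsDensityMatrix {d : ℕ} (ρ : Matrix (Fin d) (Fin d) ℂ) : Prop :=
  ρ.PosSemidef ∧ ρ.trace = 1

/-- the property of the threshold `D₂ = D₂(ε,δ,d₁)` asserted by Theorem 1:
for all `d₂ > D₂`, every orthonormal basis `b` of `ℋ₂`, every density matrix `ρ₁`
on `ℋ₁` and every bounded measurable `f : 𝕊(ℋ₁) → ℝ`,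
`u_{ρ₁} {ψ ∈ ℛ(ρ₁) : |μ₁^{ψ,b}(f) − GAP(ρ₁)(f)| < ε ‖f‖_∞} ≥ 1 − δ`. -/
def Thm1Prop (ε δ : ℝ) (d₁ : ℕ) (D₂ : ℝ) : Prop :=
  ∀ d₂ : ℕ, D₂ < (d₂ : ℝ) →
  ∀ b : Fin d₂ → Hsp d₂, Orthonormal ℂ b →
  ∀ ρ₁ : Matrix (Fin d₁) (Fin d₁) ℂ, IsDensityMatrix ρ₁ →
  ∀ f : Hsp d₁ → ℝ, Measurable f →
    (∃ C : ℝ, ∀ ψ ∈ Metric.sphere (0 : Hsp d₁) 1, |f ψ| ≤ C) →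
  ∀ μU : Measure (UG d₂), IsHaar μU →
  ENNReal.ofReal (1 - δ) ≤
    uRho ρ₁ μU {ψ | ψ ∈ Rset d₁ d₂ ρ₁ ∧
      |(∫ x, f x ∂condMeasure ψ b) - ∫ x, f x ∂GAPm ρ₁| < ε * sphereSup f}


/-! ### Auxiliary development for the proof -/

section AuxDev

open scoped NNReal
open Filter Real
open scoped Topology

instance (ι : Type*) [Countable ι] : BorelSpace (EuclideanSpace ℂ ι) := PiLp.borelSpace 2

lemma psqrt_mul_self {n : Type*} [Fintype n] [DecidableEq n] {A : Matrix n n ℂ}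
    (h : A.PosSemidef) : (posSemidefSqrt h) * (posSemidefSqrt h) = A := by
  have hU : (star h.1.eigenvectorUnitary : Matrix n n ℂ) * (h.1.eigenvectorUnitary : Matrix n n ℂ) = 1 :=
    Unitary.coe_star_mul_self _
  have hD : diagonal (fun i => ((Real.sqrt (h.1.eigenvalues i) : ℝ) : ℂ)) *
      diagonal (fun i => ((Real.sqrt (h.1.eigenvalues i) : ℝ) : ℂ))
      = diagonal (RCLike.ofReal ∘ h.1.eigenvalues) := by
    rw [diagonal_mul_diagonal]; congr 1; funext i
    rw [Function.comp_apply, ← Complex.ofReal_mul, Real.mul_self_sqrt (h.eigenvalues_nonneg i)]; rfl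
  unfold posSemidefSqrt
  conv_rhs => rw [h.1.spectral_theorem, Unitary.conjStarAlgAut_apply]
  rw [← hD]
  simp only [Matrix.mul_assoc]
  rw [← Matrix.mul_assoc (star (h.1.eigenvectorUnitary : Matrix n n ℂ)), hU, Matrix.one_mul]

lemma psqrt_herm {n : Type*} [Fintype n] [DecidableEq n] {A : Matrix n n ℂ}
    (h : A.PosSemidef) : (posSemidefSqrt h).conjTranspose = (posSemidefSqrt h) := by
  unfold posSemidefSqrt
  rw [conjTranspose_mul, conjTranspose_mul, diagonal_conjTranspose]
  simp only [← Matrix.star_eq_conjTranspose, star_star, Matrix.mul_assoc]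
  rw [show star (fun i => ((Real.sqrt (h.1.eigenvalues i) : ℝ) : ℂ))
      = (fun i => ((Real.sqrt (h.1.eigenvalues i) : ℝ) : ℂ)) from by funext i; simp]

lemma meas_toLp {ι : Type*} :
    Measurable (fun y : ι → ℂ => ((WithLp.equiv 2 (ι → ℂ)).symm y : EuclideanSpace ℂ ι)) :=
  fun s hs => by
    obtain ⟨t, ht, rfl⟩ := hs
    simpa [Set.preimage_preimage]

lemma meas_ofLp {ι : Type*} :
    Measurable (fun x : EuclideanSpace ℂ ι => WithLp.equiv 2 (ι → ℂ) x) := comap_measurable _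

lemma measurable_nrm {d : ℕ} : Measurable (nrm : Hsp d → Hsp d) := by
  unfold nrm
  exact (measurable_norm.inv).smul measurable_id

lemma norm_nrm {E : Type*} [NormedAddCommGroup E] [NormedSpace ℝ E] {x : E} (hx : x ≠ 0) :
    ‖nrm x‖ = 1 := by
  have h : ‖x‖ ≠ 0 := norm_ne_zero_iff.2 hx
  rw [nrm, norm_smul, norm_inv, norm_norm, inv_mul_cancel₀ h]

lemma nrm_smul {E : Type*} [NormedAddCommGroup E] [NormedSpace ℝ E] {c : ℝ} (hc : 0 < c)
    (x : E) : nrm (c • x) = nrm x := by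
  rcases eq_or_ne x 0 with rfl | hx
  · simp [nrm]
  · have h : ‖x‖ ≠ 0 := norm_ne_zero_iff.2 hx
    unfold nrm
    rw [norm_smul, Real.norm_eq_abs, abs_of_pos hc, smul_smul]
    congr 1
    rw [mul_inv, mul_comm (c⁻¹), mul_assoc, inv_mul_cancel₀ hc.ne', mul_one]

lemma my_integrable_dirac {α : Type*} [MeasurableSpace α] [MeasurableSingletonClass α]
    (f : α → ℝ) (a : α) : Integrable f (Measure.dirac a) :=
  (integrable_const (f a)).congr (by rw [ae_dirac_eq]; exact Filter.eventually_pure.2 rfl)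

/-- Integral with respect to the conditional measure. -/
lemma integral_condMeasure {d₁ d₂ : ℕ} (ψ : Hsp2 d₁ d₂) (b : Fin d₂ → Hsp d₂)
    (f : Hsp d₁ → ℝ) :
    ∫ x, f x ∂condMeasure ψ b
      = ∑ j : Fin d₂, ‖partialInner (b j) ψ‖ ^ 2 * f (nrm (partialInner (b j) ψ)) := by
  unfold condMeasure
  rw [integral_finset_sum_measure (fun j _ =>
    (my_integrable_dirac f _).smul_measure (by simp))]
  refine Finset.sum_congr rfl fun j _ => ?_
  rw [integral_smul_measure, integral_dirac]
  simp [ENNReal.toReal_pow]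

/-- Integral with respect to the measure `μ̃`. -/
lemma integral_tildeMu {d₁ d₂ : ℕ} (ψ : Hsp2 d₁ d₂) (b : Fin d₂ → Hsp d₂)
    (g : Hsp d₁ → ℝ) :
    ∫ x, g x ∂tildeMu ψ b
      = (d₂ : ℝ)⁻¹ * ∑ j : Fin d₂, g (Real.sqrt d₂ • partialInner (b j) ψ) := by
  unfold tildeMu
  rw [integral_smul_measure,
    integral_finset_sum_measure (fun j _ => my_integrable_dirac g _)]
  simp [integral_dirac]

/-- Parseval for an orthonormal family of full cardinality. -/
lemma parseval_aux {d : ℕ} (b : Fin d → Hsp d) (hb : Orthonormal ℂ b) (w : Hsp d) :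
    ∑ j : Fin d, ‖(inner ℂ (b j) w : ℂ)‖ ^ 2 = ‖w‖ ^ 2 := by
  classical
  have hsp : ⊤ ≤ Submodule.span ℂ (Set.range b) :=
    (hb.linearIndependent.span_eq_top_of_card_eq_finrank' (by simp)).ge
  let OB : OrthonormalBasis (Fin d) ℂ (Hsp d) := OrthonormalBasis.mk hb hsp
  have hOB : ⇑OB = b := OrthonormalBasis.coe_mk hb hsp
  have h1 : ∀ j, (inner ℂ (b j) w : ℂ) = OB.repr w j := by
    intro j; rw [← hOB, OB.repr_apply_apply]
  have h2 : ‖OB.repr w‖ ^ 2 = ‖w‖ ^ 2 := by rw [OB.repr.norm_map]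
  rw [← h2, EuclideanSpace.norm_eq, Real.sq_sqrt (by positivity)]
  exact Finset.sum_congr rfl fun j _ => by rw [h1 j]

/-- Parseval identity for the partial inner products. -/
lemma sum_sq_norm_partialInner {d₁ d₂ : ℕ} (b : Fin d₂ → Hsp d₂) (hb : Orthonormal ℂ b)
    (ψ : Hsp2 d₁ d₂) :
    ∑ j : Fin d₂, ‖partialInner (b j) ψ‖ ^ 2 = ‖ψ‖ ^ 2 := by
  classical
  set w : Fin d₁ → Hsp d₂ := fun i => (WithLp.equiv 2 (Fin d₂ → ℂ)).symm
    (fun k => ψ (i, k)) with hw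
  have key : ∀ j i, (partialInner (b j) ψ) i = (inner ℂ (b j) (w i) : ℂ) := by
    intro j i
    simp only [partialInner, hw, PiLp.inner_apply, RCLike.inner_apply]
    change ∑ k : Fin d₂, conj (WithLp.equiv 2 (Fin d₂ → ℂ) (b j) k) *
      WithLp.equiv 2 (Fin d₁ × Fin d₂ → ℂ) ψ (i, k) = _
    exact Finset.sum_congr rfl fun k _ => mul_comm _ _
  have hnorm : ∀ j, ‖partialInner (b j) ψ‖ ^ 2 = ∑ i : Fin d₁, ‖(inner ℂ (b j) (w i) : ℂ)‖ ^ 2 := by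
    intro j
    rw [EuclideanSpace.norm_eq, Real.sq_sqrt (by positivity)]
    exact Finset.sum_congr rfl fun i _ => by rw [key j i]
  calc ∑ j : Fin d₂, ‖partialInner (b j) ψ‖ ^ 2
      = ∑ j : Fin d₂, ∑ i : Fin d₁, ‖(inner ℂ (b j) (w i) : ℂ)‖ ^ 2 :=
        Finset.sum_congr rfl fun j _ => hnorm j
    _ = ∑ i : Fin d₁, ∑ j : Fin d₂, ‖(inner ℂ (b j) (w i) : ℂ)‖ ^ 2 := Finset.sum_comm
    _ = ∑ i : Fin d₁, ‖w i‖ ^ 2 := Finset.sum_congr rfl fun i _ => parseval_aux b hb (w i)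
    _ = ‖ψ‖ ^ 2 := by
        have hwnorm : ∀ i, ‖w i‖ ^ 2 = ∑ k : Fin d₂, ‖ψ (i, k)‖ ^ 2 := by
          intro i
          rw [EuclideanSpace.norm_eq, Real.sq_sqrt (by positivity)]
          exact Finset.sum_congr rfl fun k _ => rfl
        rw [Finset.sum_congr rfl fun i _ => hwnorm i,
          EuclideanSpace.norm_eq (ψ : EuclideanSpace ℂ (Fin d₁ × Fin d₂)),
          Real.sq_sqrt (by positivity), Fintype.sum_prod_type]

/-! #### Moments of the one-dimensional Gaussians -/

private lemma hexp_deriv (x : ℝ) :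
    HasDerivAt (fun y : ℝ => Real.exp (-y ^ 2)) (Real.exp (-x ^ 2) * -(2 * x)) x := by
  have h : HasDerivAt (fun y : ℝ => -y ^ 2) (-(2 * x)) x := by
    simpa using (hasDerivAt_pow 2 x).fun_neg
  exact h.exp

private lemma tendsto_sq_atTop : Tendsto (fun x : ℝ => x ^ 2) atTop atTop :=
  tendsto_pow_atTop two_ne_zero

private lemma tendsto_sq_atBot : Tendsto (fun x : ℝ => x ^ 2) atBot atTop := by
  have := tendsto_sq_atTop.comp tendsto_neg_atBot_atTop
  simpa [Function.comp_def, neg_sq] using this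

private lemma tendsto_exp_negsq_atTop : Tendsto (fun x : ℝ => Real.exp (-x ^ 2)) atTop (𝓝 0) :=
  Real.tendsto_exp_atBot.comp (tendsto_neg_atTop_atBot.comp tendsto_sq_atTop)

private lemma tendsto_exp_negsq_atBot : Tendsto (fun x : ℝ => Real.exp (-x ^ 2)) atBot (𝓝 0) :=
  Real.tendsto_exp_atBot.comp (tendsto_neg_atTop_atBot.comp tendsto_sq_atBot)

private lemma integrable_xexp : Integrable (fun x : ℝ => x * Real.exp (-x ^ 2)) := by
  simpa using integrable_mul_exp_neg_mul_sq (b := 1) one_pos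

private lemma integrable_exp_negsq : Integrable (fun x : ℝ => Real.exp (-x ^ 2)) := by
  simpa using integrable_exp_neg_mul_sq (b := 1) one_pos

private lemma integrable_sqexp : Integrable (fun x : ℝ => x ^ 2 * Real.exp (-x ^ 2)) := by
  have := integrable_rpow_mul_exp_neg_mul_sq (b := 1) one_pos (s := 2) (by norm_num)
  have he : ∀ x : ℝ, x ^ (2 : ℝ) * Real.exp (-1 * x ^ 2) = x ^ 2 * Real.exp (-x ^ 2) := by
    intro x
    rw [show ((2 : ℝ) = ((2 : ℕ) : ℝ)) by norm_num, Real.rpow_natCast]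
    norm_num
  exact this.congr (Filter.Eventually.of_forall he)

private lemma integral_xexp_eq : ∫ x : ℝ, x * Real.exp (-x ^ 2) = 0 := by
  have hder : ∀ x : ℝ, HasDerivAt (fun y : ℝ => -(1 / 2) * Real.exp (-y ^ 2))
      (x * Real.exp (-x ^ 2)) x := by
    intro x
    have := (hexp_deriv x).const_mul (-(1 / 2) : ℝ)
    refine this.congr_deriv ?_
    ring
  have htop : Tendsto (fun x : ℝ => -(1 / 2) * Real.exp (-x ^ 2)) atTop (𝓝 0) := by
    simpa using tendsto_exp_negsq_atTop.const_mul (-(1 / 2) : ℝ)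
  have hbot : Tendsto (fun x : ℝ => -(1 / 2) * Real.exp (-x ^ 2)) atBot (𝓝 0) := by
    simpa using tendsto_exp_negsq_atBot.const_mul (-(1 / 2) : ℝ)
  have := integral_of_hasDerivAt_of_tendsto hder integrable_xexp hbot htop
  simpa using this

private lemma tendsto_xexp_atTop : Tendsto (fun x : ℝ => x * Real.exp (-x ^ 2)) atTop (𝓝 0) := by
  have h := rpow_mul_exp_neg_mul_sq_isLittleO_exp_neg (b := 1) one_pos 1
  have hlim : Tendsto (fun x : ℝ => Real.exp (-(1 / 2) * x)) atTop (𝓝 0) := by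
    have h2 : Tendsto (fun x : ℝ => -(1 / 2) * x) atTop atBot :=
      (tendsto_const_mul_atBot_of_neg (by norm_num : (-(1/2) : ℝ) < 0)).mpr tendsto_id
    exact Real.tendsto_exp_atBot.comp h2
  have := h.trans_tendsto hlim
  simpa [Real.rpow_one] using this

private lemma integral_sqexp_eq : ∫ x : ℝ, x ^ 2 * Real.exp (-x ^ 2) = Real.sqrt π / 2 := by
  have hder : ∀ x : ℝ, HasDerivAt (fun y : ℝ => y * Real.exp (-y ^ 2))
      (Real.exp (-x ^ 2) - 2 * (x ^ 2 * Real.exp (-x ^ 2))) x := by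
    intro x
    have := (hasDerivAt_id x).fun_mul (hexp_deriv x)
    refine this.congr_deriv ?_
    simp only [id_eq]
    ring
  have hint : Integrable (fun x : ℝ => Real.exp (-x ^ 2) - 2 * (x ^ 2 * Real.exp (-x ^ 2))) :=
    integrable_exp_negsq.sub (integrable_sqexp.const_mul 2)
  have hbot : Tendsto (fun x : ℝ => x * Real.exp (-x ^ 2)) atBot (𝓝 0) := by
    have := (tendsto_xexp_atTop.comp tendsto_neg_atBot_atTop).neg
    simpa [Function.comp_def, neg_sq] using this
  have h0 := integral_of_hasDerivAt_of_tendsto hder hint hbot tendsto_xexp_atTop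
  have hval : ∫ x : ℝ, Real.exp (-x ^ 2) = Real.sqrt π := by
    simpa using integral_gaussian 1
  rw [integral_sub integrable_exp_negsq (integrable_sqexp.const_mul 2),
    integral_const_mul, hval, sub_zero] at h0
  linarith

/-! #### The measure `gaussianReal 0 (1/2)` -/

private def ν : Measure ℝ := ProbabilityTheory.gaussianReal 0 (1 / 2 : ℝ≥0)

private lemma dens_eq : ν = volume.withDensity
    (fun x => ENNReal.ofReal ((Real.sqrt π)⁻¹ * Real.exp (-x ^ 2))) := by
  rw [ν, ProbabilityTheory.gaussianReal_of_var_ne_zero 0 (by norm_num)]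
  congr 1
  funext x
  rw [ProbabilityTheory.gaussianPDF_def]
  congr 1
  unfold ProbabilityTheory.gaussianPDFReal
  have h1 : 2 * π * ((1 / 2 : ℝ≥0) : ℝ) = π := by push_cast; ring
  have h2 : 2 * ((1 / 2 : ℝ≥0) : ℝ) = 1 := by push_cast; ring
  rw [h1, h2]
  norm_num

private lemma dens_meas : Measurable fun x : ℝ =>
    ((Real.sqrt π)⁻¹ * Real.exp (-x ^ 2)).toNNReal :=
  (((measurable_id.pow_const 2).neg.exp).const_mul _).real_toNNReal

private lemma integral_nu (g : ℝ → ℝ) :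
    ∫ x, g x ∂ν = ∫ x, (Real.sqrt π)⁻¹ * Real.exp (-x ^ 2) * g x := by
  rw [dens_eq]
  rw [show (fun x : ℝ => ENNReal.ofReal ((Real.sqrt π)⁻¹ * Real.exp (-x ^ 2)))
      = fun x : ℝ => (((Real.sqrt π)⁻¹ * Real.exp (-x ^ 2)).toNNReal : ℝ≥0∞) from rfl]
  rw [integral_withDensity_eq_integral_smul dens_meas g]
  refine integral_congr_ae (Filter.Eventually.of_forall fun x => ?_)
  show ((Real.sqrt π)⁻¹ * Real.exp (-x ^ 2)).toNNReal • g x = _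
  rw [NNReal.smul_def, Real.coe_toNNReal _ (by positivity)]
  rfl

private lemma integrable_nu {g : ℝ → ℝ}
    (h : Integrable (fun x => (Real.sqrt π)⁻¹ * Real.exp (-x ^ 2) * g x)) :
    Integrable g ν := by
  rw [dens_eq]
  rw [show (fun x : ℝ => ENNReal.ofReal ((Real.sqrt π)⁻¹ * Real.exp (-x ^ 2)))
      = fun x : ℝ => (((Real.sqrt π)⁻¹ * Real.exp (-x ^ 2)).toNNReal : ℝ≥0∞) from rfl]
  rw [integrable_withDensity_iff_integrable_smul dens_meas]
  refine h.congr (Filter.Eventually.of_forall fun x => ?_)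
  show _ = ((Real.sqrt π)⁻¹ * Real.exp (-x ^ 2)).toNNReal • g x
  rw [NNReal.smul_def, Real.coe_toNNReal _ (by positivity)]
  rfl

private lemma sqrtpi_ne : Real.sqrt π ≠ 0 := (Real.sqrt_pos.2 Real.pi_pos).ne'

private lemma nu_mean : ∫ x, x ∂ν = 0 := by
  rw [integral_nu]
  have : ∀ x : ℝ, (Real.sqrt π)⁻¹ * Real.exp (-x ^ 2) * x
      = (Real.sqrt π)⁻¹ * (x * Real.exp (-x ^ 2)) := fun x => by ring
  rw [integral_congr_ae (Filter.Eventually.of_forall this),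
    integral_const_mul, integral_xexp_eq, mul_zero]

private lemma nu_sq : ∫ x, x ^ 2 ∂ν = 1 / 2 := by
  rw [integral_nu]
  have : ∀ x : ℝ, (Real.sqrt π)⁻¹ * Real.exp (-x ^ 2) * x ^ 2
      = (Real.sqrt π)⁻¹ * (x ^ 2 * Real.exp (-x ^ 2)) := fun x => by ring
  rw [integral_congr_ae (Filter.Eventually.of_forall this),
    integral_const_mul, integral_sqexp_eq]
  field_simp

private lemma nu_int_id : Integrable (fun x : ℝ => x) ν := by
  refine integrable_nu ((integrable_xexp.const_mul ((Real.sqrt π)⁻¹)).congr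
    (Filter.Eventually.of_forall fun x => by ring))

private lemma nu_int_sq : Integrable (fun x : ℝ => x ^ 2) ν := by
  refine integrable_nu ((integrable_sqexp.const_mul ((Real.sqrt π)⁻¹)).congr
    (Filter.Eventually.of_forall fun x => by ring))

instance : IsProbabilityMeasure ν := by
  unfold ν; infer_instance

/-! #### Moments of the standard complex Gaussian -/

private def φC : ℝ × ℝ → ℂ := fun p => (p.1 : ℂ) + p.2 * Complex.I

private lemma measurable_φC : Measurable φC :=
  (Complex.measurable_ofReal.comp measurable_fst).add
    ((Complex.measurable_ofReal.comp measurable_snd).mul_const Complex.I)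

private def prodG : Measure (ℝ × ℝ) := ν.prod ν

instance : IsProbabilityMeasure prodG := by
  unfold prodG; infer_instance

private lemma stdC_eq : stdCGaussian = Measure.map φC prodG := rfl

instance : IsProbabilityMeasure stdCGaussian := by
  rw [stdC_eq]; exact Measure.isProbabilityMeasure_map measurable_φC.aemeasurable

private lemma map_fst_prodG : Measure.map Prod.fst prodG = ν := by
  rw [show Measure.map Prod.fst prodG = prodG.fst from rfl]
  exact Measure.fst_prod

private lemma map_snd_prodG : Measure.map Prod.snd prodG = ν := by
  rw [show Measure.map Prod.snd prodG = prodG.snd from rfl]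
  exact Measure.snd_prod

private lemma integrable_comp_fst {E : Type*} [NormedAddCommGroup E] {g : ℝ → E}
    (hgm : StronglyMeasurable g) (hg : Integrable g ν) :
    Integrable (fun p : ℝ × ℝ => g p.1) prodG := by
  have h : Integrable g (Measure.map Prod.fst prodG) := by rwa [map_fst_prodG]
  exact (integrable_map_measure hgm.aestronglyMeasurable
    measurable_fst.aemeasurable).mp h

private lemma integrable_comp_snd {E : Type*} [NormedAddCommGroup E] {g : ℝ → E}
    (hgm : StronglyMeasurable g) (hg : Integrable g ν) :
    Integrable (fun p : ℝ × ℝ => g p.2) prodG := by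
  have h : Integrable g (Measure.map Prod.snd prodG) := by rwa [map_snd_prodG]
  exact (integrable_map_measure hgm.aestronglyMeasurable
    measurable_snd.aemeasurable).mp h

private lemma integral_comp_fst {E : Type*} [NormedAddCommGroup E] [NormedSpace ℝ E]
    {g : ℝ → E} (hgm : StronglyMeasurable g) :
    ∫ p : ℝ × ℝ, g p.1 ∂prodG = ∫ x, g x ∂ν := by
  rw [← map_fst_prodG,
    integral_map measurable_fst.aemeasurable (by
      rw [map_fst_prodG]; exact hgm.aestronglyMeasurable)]

private lemma integral_comp_snd {E : Type*} [NormedAddCommGroup E] [NormedSpace ℝ E]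
    {g : ℝ → E} (hgm : StronglyMeasurable g) :
    ∫ p : ℝ × ℝ, g p.2 ∂prodG = ∫ x, g x ∂ν := by
  rw [← map_snd_prodG,
    integral_map measurable_snd.aemeasurable (by
      rw [map_snd_prodG]; exact hgm.aestronglyMeasurable)]

private lemma intCfst : Integrable (fun p : ℝ × ℝ => (p.1 : ℂ)) prodG :=
  integrable_comp_fst (Complex.measurable_ofReal.stronglyMeasurable) nu_int_id.ofReal

private lemma intCsnd : Integrable (fun p : ℝ × ℝ => (p.2 : ℂ) * Complex.I) prodG :=
  (integrable_comp_snd (Complex.measurable_ofReal.stronglyMeasurable)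
    nu_int_id.ofReal).mul_const Complex.I

private lemma nu_meanC : ∫ x : ℝ, (x : ℂ) ∂ν = 0 := by
  have h := Complex.ofRealCLM.integral_comp_comm nu_int_id
  simp only [Complex.ofRealCLM_apply, nu_mean, Complex.ofReal_zero] at h
  exact h

private lemma stdC_int_id : Integrable (fun z : ℂ => z) stdCGaussian := by
  rw [stdC_eq]
  exact (integrable_map_measure (g := fun z : ℂ => z)
    measurable_id.aestronglyMeasurable measurable_φC.aemeasurable).mpr
    ((intCfst.add intCsnd).congr (Filter.Eventually.of_forall fun p => rfl))

private lemma stdC_mean : ∫ z, z ∂stdCGaussian = 0 := by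
  rw [stdC_eq, integral_map (f := fun z : ℂ => z) measurable_φC.aemeasurable
    measurable_id.aestronglyMeasurable]
  have : ∫ p : ℝ × ℝ, φC p ∂prodG
      = (∫ p : ℝ × ℝ, (p.1 : ℂ) ∂prodG) + ∫ p : ℝ × ℝ, (p.2 : ℂ) * Complex.I ∂prodG :=
    integral_add intCfst intCsnd
  rw [show ∫ p : ℝ × ℝ, (fun z : ℂ => z) (φC p) ∂prodG = ∫ p : ℝ × ℝ, φC p ∂prodG from rfl,
    this]
  have h1 : ∫ p : ℝ × ℝ, (p.1 : ℂ) ∂prodG = 0 := by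
    rw [integral_comp_fst (Complex.measurable_ofReal.stronglyMeasurable), nu_meanC]
  have h2 : ∫ p : ℝ × ℝ, (p.2 : ℂ) * Complex.I ∂prodG = 0 := by
    have hsm : ∀ p : ℝ × ℝ, (p.2 : ℂ) * Complex.I = (p.2 : ℂ) • Complex.I := fun p => rfl
    rw [integral_congr_ae (Filter.Eventually.of_forall hsm),
      integral_smul_const, integral_comp_snd
        (Complex.measurable_ofReal.stronglyMeasurable),
      nu_meanC, zero_smul]
  rw [h1, h2, add_zero]

private lemma stdC_conj_mean : ∫ z, (starRingEnd ℂ) z ∂stdCGaussian = 0 := by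
  rw [integral_conj, stdC_mean, map_zero]

private lemma sq_norm_φC : ∀ p : ℝ × ℝ, ‖φC p‖ ^ 2 = p.1 ^ 2 + p.2 ^ 2 := by
  intro p
  rw [Complex.sq_norm]
  exact Complex.normSq_add_mul_I p.1 p.2

private lemma int_sq_prod_fst : Integrable (fun p : ℝ × ℝ => p.1 ^ 2) prodG :=
  integrable_comp_fst ((continuous_pow 2).measurable.stronglyMeasurable) nu_int_sq

private lemma int_sq_prod_snd : Integrable (fun p : ℝ × ℝ => p.2 ^ 2) prodG :=
  integrable_comp_snd ((continuous_pow 2).measurable.stronglyMeasurable) nu_int_sq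

private lemma stdC_int_normsq : Integrable (fun z : ℂ => ‖z‖ ^ 2) stdCGaussian := by
  rw [stdC_eq]
  rw [integrable_map_measure
    (measurable_norm.pow_const 2).aestronglyMeasurable measurable_φC.aemeasurable]
  exact (int_sq_prod_fst.add int_sq_prod_snd).congr
    (Filter.Eventually.of_forall fun p => (sq_norm_φC p).symm)

private lemma stdC_second_moment : ∫ z, z * (starRingEnd ℂ) z ∂stdCGaussian = 1 := by
  rw [stdC_eq, integral_map (f := fun z : ℂ => z * (starRingEnd ℂ) z)
    measurable_φC.aemeasurable
    (measurable_id.mul (Complex.continuous_conj.measurable)).aestronglyMeasurable]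
  have hpt : ∀ p : ℝ × ℝ, φC p * (starRingEnd ℂ) (φC p) = ((p.1 ^ 2 + p.2 ^ 2 : ℝ) : ℂ) := by
    intro p
    rw [Complex.mul_conj]
    norm_cast
    exact Complex.normSq_add_mul_I p.1 p.2
  have hC := Complex.ofRealCLM.integral_comp_comm (int_sq_prod_fst.add int_sq_prod_snd)
  simp only [Complex.ofRealCLM_apply, Pi.add_apply] at hC
  rw [integral_congr_ae (Filter.Eventually.of_forall hpt), hC,
    integral_add int_sq_prod_fst int_sq_prod_snd,
    integral_comp_fst ((continuous_pow 2).measurable.stronglyMeasurable),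
    integral_comp_snd ((continuous_pow 2).measurable.stronglyMeasurable), nu_sq]
  norm_num

/-! #### Moments of the standard Gaussian on `ℂ^d` -/

private def piG (d : ℕ) : Measure (Fin d → ℂ) := Measure.pi fun _ : Fin d => stdCGaussian

instance (d : ℕ) : IsProbabilityMeasure (piG d) := by
  unfold piG; infer_instance

private lemma map_eval_piG {d : ℕ} (k : Fin d) :
    Measure.map (fun y : Fin d → ℂ => y k) (piG d) = stdCGaussian := by
  unfold piG
  ext s hs
  rw [Measure.map_apply (measurable_pi_apply k) hs]
  rw [show (fun y : Fin d → ℂ => y k) ⁻¹' s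
      = Set.pi Set.univ (Function.update (fun _ : Fin d => Set.univ) k s) from
    Set.eval_preimage]
  rw [Measure.pi_pi]
  rw [Finset.prod_eq_single k (fun j _ hj => by
    rw [Function.update_of_ne hj]; exact measure_univ) (fun h => absurd (Finset.mem_univ k) h)]
  rw [Function.update_self]

private lemma piG_int_coord_sq {d : ℕ} (k : Fin d) :
    Integrable (fun y : Fin d → ℂ => ‖y k‖ ^ 2) (piG d) := by
  have h : Integrable (fun z : ℂ => ‖z‖ ^ 2)
      (Measure.map (fun y : Fin d → ℂ => y k) (piG d)) := by
    rw [map_eval_piG]; exact stdC_int_normsq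
  exact (integrable_map_measure
    (measurable_norm.pow_const 2).aestronglyMeasurable
    (measurable_pi_apply k).aemeasurable).mp h

private lemma meas_coord_mul {d : ℕ} (k l : Fin d) :
    Measurable (fun y : Fin d → ℂ => y k * (starRingEnd ℂ) (y l)) :=
  (measurable_pi_apply k).mul
    (Complex.continuous_conj.measurable.comp (measurable_pi_apply l))

private lemma piG_int_mul {d : ℕ} (k l : Fin d) :
    Integrable (fun y : Fin d → ℂ => y k * (starRingEnd ℂ) (y l)) (piG d) := by
  refine Integrable.mono'
    (g := fun y : Fin d → ℂ => (1 / 2 : ℝ) * (‖y k‖ ^ 2 + ‖y l‖ ^ 2))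
    (by exact ((piG_int_coord_sq k).add (piG_int_coord_sq l)).const_mul (1 / 2))
    (meas_coord_mul k l).aestronglyMeasurable
    (Filter.Eventually.of_forall fun y => ?_)
  show ‖y k * (starRingEnd ℂ) (y l)‖ ≤ (1 / 2 : ℝ) * (‖y k‖ ^ 2 + ‖y l‖ ^ 2)
  rw [norm_mul, RCLike.norm_conj]
  nlinarith [sq_nonneg (‖y k‖ - ‖y l‖), norm_nonneg (y k), norm_nonneg (y l)]

private lemma piG_moment {d : ℕ} (k l : Fin d) :
    ∫ y, y k * (starRingEnd ℂ) (y l) ∂piG d = if k = l then 1 else 0 := by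
  classical
  letI : MeasureSpace ℂ := ⟨stdCGaussian⟩
  haveI : SigmaFinite (volume : Measure ℂ) := by
    change SigmaFinite stdCGaussian; infer_instance
  haveI : IsProbabilityMeasure (volume : Measure ℂ) := by
    change IsProbabilityMeasure stdCGaussian; infer_instance
  have hvol : piG d = (volume : Measure (Fin d → ℂ)) := rfl
  have key : ∀ y : Fin d → ℂ, y k * (starRingEnd ℂ) (y l)
      = ∏ i : Fin d, ((if i = k then y i else 1) * (if i = l then (starRingEnd ℂ) (y i) else 1)) := by
    intro y
    rw [Finset.prod_mul_distrib, Finset.prod_ite_eq' Finset.univ k (fun i => y i),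
      Finset.prod_ite_eq' Finset.univ l (fun i => (starRingEnd ℂ) (y i))]
    simp
  rw [integral_congr_ae (Filter.Eventually.of_forall key), piG]
  rw [integral_fintype_prod_eq_prod
    (f := fun i z => (if i = k then z else 1) * (if i = l then (starRingEnd ℂ) z else 1))]
  by_cases hkl : k = l
  · subst hkl
    rw [if_pos rfl, Finset.prod_eq_one]
    intro i _
    by_cases hi : i = k
    · subst hi
      simp only [if_pos rfl]
      exact stdC_second_moment
    · simp only [if_neg hi, one_mul]
      simp
  · rw [if_neg hkl, Finset.prod_eq_zero (Finset.mem_univ k)]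
    simp only [if_pos rfl, if_neg hkl, mul_one]
    exact stdC_mean

/-! #### Second moment of `gaussian ρ` -/

private def sqrtMap {d : ℕ} (S : Matrix (Fin d) (Fin d) ℂ) : (Fin d → ℂ) → Hsp d :=
  fun y => (WithLp.equiv 2 (Fin d → ℂ)).symm (S.mulVec y)

private lemma measurable_mulVec {d : ℕ} (S : Matrix (Fin d) (Fin d) ℂ) :
    Measurable (fun y : Fin d → ℂ => S.mulVec y) := by
  refine measurable_pi_lambda _ fun i => ?_
  unfold Matrix.mulVec dotProduct
  exact Finset.measurable_sum _ fun k _ => (measurable_pi_apply k).const_mul _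

private lemma measurable_sqrtMap {d : ℕ} (S : Matrix (Fin d) (Fin d) ℂ) :
    Measurable (sqrtMap S) := (meas_toLp).comp (measurable_mulVec S)

private lemma gaussian_eq_map {d : ℕ} {ρ : Matrix (Fin d) (Fin d) ℂ} (h : ρ.PosSemidef) :
    gaussian ρ = Measure.map (sqrtMap (posSemidefSqrt h)) (piG d) := by
  unfold gaussian stdGaussian
  rw [dif_pos h]
  rw [Measure.map_map (f := ⇑(WithLp.equiv 2 (Fin d → ℂ)).symm)
    (g := fun x : Hsp d => (WithLp.equiv 2 (Fin d → ℂ)).symm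
      ((posSemidefSqrt h).mulVec (WithLp.equiv 2 (Fin d → ℂ) x)))
    ((meas_toLp).comp ((measurable_mulVec _).comp (meas_ofLp)))
    (meas_toLp)]
  rfl

lemma gaussian_prob {d : ℕ} {ρ : Matrix (Fin d) (Fin d) ℂ} (h : ρ.PosSemidef) :
    IsProbabilityMeasure (gaussian ρ) := by
  rw [gaussian_eq_map h]
  exact Measure.isProbabilityMeasure_map (measurable_sqrtMap (posSemidefSqrt h)).aemeasurable

private lemma norm_sq_expand {d : ℕ} (S : Matrix (Fin d) (Fin d) ℂ) (y : Fin d → ℂ) :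
    ‖sqrtMap S y‖ ^ 2 = ∑ i : Fin d, ∑ k : Fin d, ∑ l : Fin d,
      (S i k * (starRingEnd ℂ) (S i l) * (y k * (starRingEnd ℂ) (y l))).re := by
  rw [sqrtMap, EuclideanSpace.norm_eq, Real.sq_sqrt (by positivity)]
  refine Finset.sum_congr rfl fun i _ => ?_
  have h1 : ((WithLp.equiv 2 (Fin d → ℂ)).symm (S.mulVec y)) i = ∑ k : Fin d, S i k * y k := rfl
  rw [h1]
  have h2 : ∀ c : ℂ, ‖c‖ ^ 2 = (c * (starRingEnd ℂ) c).re := by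
    intro c
    rw [Complex.mul_conj, Complex.ofReal_re, Complex.normSq_eq_norm_sq]
  rw [h2]
  rw [map_sum (starRingEnd ℂ), Finset.sum_mul_sum]
  rw [Complex.re_sum]
  refine Finset.sum_congr rfl fun k _ => ?_
  rw [Complex.re_sum]
  refine Finset.sum_congr rfl fun l _ => ?_
  congr 1
  rw [_root_.map_mul]
  ring

private lemma term_integrable {d : ℕ} (c : ℂ) (k l : Fin d) :
    Integrable (fun y : Fin d → ℂ => (c * (y k * (starRingEnd ℂ) (y l))).re) (piG d) :=
  ((piG_int_mul k l).const_mul c).re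

private lemma term_integral {d : ℕ} (c : ℂ) (k l : Fin d) :
    ∫ y, (c * (y k * (starRingEnd ℂ) (y l))).re ∂piG d
      = (c * (if k = l then 1 else 0)).re := by
  have h1 : ∫ y, (c * (y k * (starRingEnd ℂ) (y l))).re ∂piG d
      = (∫ y, c * (y k * (starRingEnd ℂ) (y l)) ∂piG d).re := by
    have := integral_re ((piG_int_mul k l).const_mul c)
    simpa using this
  rw [h1]
  have h2 : ∫ y, c * (y k * (starRingEnd ℂ) (y l)) ∂piG d
      = c * ∫ y, y k * (starRingEnd ℂ) (y l) ∂piG d := by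
    simpa [smul_eq_mul] using
      integral_smul c (fun y : Fin d → ℂ => y k * (starRingEnd ℂ) (y l))
        (μ := piG d)
  rw [h2, piG_moment k l]

private lemma gaussian_int_norm_sq {d : ℕ} {ρ : Matrix (Fin d) (Fin d) ℂ} (h : ρ.PosSemidef) :
    Integrable (fun x : Hsp d => ‖x‖ ^ 2) (gaussian ρ) := by
  rw [gaussian_eq_map h]
  rw [integrable_map_measure
    (measurable_norm.pow_const 2).aestronglyMeasurable
    (measurable_sqrtMap (posSemidefSqrt h)).aemeasurable]
  have hint : Integrable (fun y : Fin d → ℂ => ∑ i : Fin d, ∑ k : Fin d, ∑ l : Fin d,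
      ((posSemidefSqrt h) i k * (starRingEnd ℂ) ((posSemidefSqrt h) i l) * (y k * (starRingEnd ℂ) (y l))).re)
      (piG d) :=
    integrable_finset_sum _ fun i _ =>
      integrable_finset_sum _ fun k _ =>
        integrable_finset_sum _ fun l _ => term_integrable _ k l
  exact hint.congr (Filter.Eventually.of_forall fun y => (norm_sq_expand (posSemidefSqrt h) y).symm)

private lemma gaussian_second_moment {d : ℕ} {ρ : Matrix (Fin d) (Fin d) ℂ}
    (h : ρ.PosSemidef) :
    ∫ x, ‖x‖ ^ 2 ∂gaussian ρ = ρ.trace.re := by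
  rw [gaussian_eq_map h]
  rw [integral_map (measurable_sqrtMap (posSemidefSqrt h)).aemeasurable
    (measurable_norm.pow_const 2).aestronglyMeasurable]
  rw [integral_congr_ae
    (Filter.Eventually.of_forall fun y => norm_sq_expand (posSemidefSqrt h) y)]
  rw [integral_finset_sum _ (fun i _ =>
    integrable_finset_sum _ fun k _ =>
      integrable_finset_sum _ fun l _ => term_integrable _ k l)]
  have step : ∀ i : Fin d, ∫ y, (∑ k : Fin d, ∑ l : Fin d,
      ((posSemidefSqrt h) i k * (starRingEnd ℂ) ((posSemidefSqrt h) i l) * (y k * (starRingEnd ℂ) (y l))).re) ∂piG d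
      = ∑ k : Fin d, ((posSemidefSqrt h) i k * (starRingEnd ℂ) ((posSemidefSqrt h) i k)).re := by
    intro i
    rw [integral_finset_sum _ (fun k _ =>
      integrable_finset_sum _ fun l _ => term_integrable _ k l)]
    refine Finset.sum_congr rfl fun k _ => ?_
    rw [integral_finset_sum _ (fun l _ => term_integrable _ k l)]
    rw [Finset.sum_congr rfl fun l _ => term_integral ((posSemidefSqrt h) i k * (starRingEnd ℂ) ((posSemidefSqrt h) i l)) k l]
    rw [Finset.sum_eq_single k]
    · rw [if_pos rfl, mul_one]
    · intro l _ hl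
      rw [if_neg (fun hx => hl hx.symm), mul_zero, Complex.zero_re]
    · intro hk; exact absurd (Finset.mem_univ k) hk
  rw [Finset.sum_congr rfl fun i _ => step i]
  have htr : ρ.trace = ∑ i : Fin d, ∑ k : Fin d,
      (posSemidefSqrt h) i k * (starRingEnd ℂ) ((posSemidefSqrt h) i k) := by
    conv_lhs => rw [← psqrt_mul_self h]
    rw [Matrix.trace]
    refine Finset.sum_congr rfl fun i _ => ?_
    rw [Matrix.diag_apply, Matrix.mul_apply]
    refine Finset.sum_congr rfl fun k _ => ?_
    congr 1
    have hherm : (posSemidefSqrt h).conjTranspose = (posSemidefSqrt h) := psqrt_herm h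
    calc (posSemidefSqrt h) k i = (posSemidefSqrt h).conjTranspose k i := by rw [hherm]
      _ = (starRingEnd ℂ) ((posSemidefSqrt h) i k) := rfl
  rw [htr, Complex.re_sum]
  exact Finset.sum_congr rfl fun i _ => (Complex.re_sum _ _).symm

/-! #### Integral against `GAPm` -/

private lemma integral_GAPm {d : ℕ} (ρ : Matrix (Fin d) (Fin d) ℂ) (f : Hsp d → ℝ)
    (hfm : Measurable f) :
    ∫ x, f x ∂GAPm ρ = ∫ x, f (nrm x) * ‖x‖ ^ 2 ∂gaussian ρ := by
  unfold GAPm adjust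
  rw [integral_map measurable_nrm.aemeasurable hfm.aestronglyMeasurable]
  rw [show (fun ψ : Hsp d => ENNReal.ofReal (‖ψ‖ ^ 2))
      = fun ψ : Hsp d => (((‖ψ‖ ^ 2).toNNReal : ℝ≥0) : ℝ≥0∞) from rfl]
  rw [integral_withDensity_eq_integral_smul
    ((measurable_norm.pow_const 2).real_toNNReal) (fun x => f (nrm x))]
  refine integral_congr_ae (Filter.Eventually.of_forall fun x => ?_)
  show (‖x‖ ^ 2).toNNReal • f (nrm x) = f (nrm x) * ‖x‖ ^ 2
  rw [NNReal.smul_def, Real.coe_toNNReal _ (by positivity)]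
  exact mul_comm _ _

end AuxDev


/-- **Lemma** (set inclusion `M(f,ε) ⊇ M̃((f∘P)1_{N<R}N², ε/4R²) ∩ M̃(1_{N<R}N², ε/4R²)`):
with `R = R(ε/4,d₁)` a radius such that `∫_{‖ψ‖<R} G(ρ)(dψ)‖ψ‖² > 1 − ε/4` for every
density matrix `ρ` on `ℋ₁`, the set of `ψ ∈ ℛ(ρ₁)` with
`|μ₁^{ψ,b}(f) − GAP(ρ₁)(f)| < ε‖f‖_∞` contains the intersection of the corresponding
Gaussian sets for the cut-off test functions `(f∘P)·1_{N<R}·N²` and `1_{N<R}·N²`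
at accuracy `ε/(4R²)`. -/
theorem M_set_inclusion (ε : ℝ) (hε : 0 < ε) (hε1 : ε < 1) (d₁ d₂ : ℕ)
    (b : Fin d₂ → Hsp d₂) (hb : Orthonormal ℂ b)
    (ρ₁ : Matrix (Fin d₁) (Fin d₁) ℂ) (hρ₁ : IsDensityMatrix ρ₁)
    (R : ℝ) (hR0 : 0 < R)
    (hR : ∀ ρ : Matrix (Fin d₁) (Fin d₁) ℂ, IsDensityMatrix ρ →
      1 - ε / 4 < ∫ ψ in {ψ : Hsp d₁ | ‖ψ‖ < R}, ‖ψ‖ ^ 2 ∂gaussian ρ)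
    (f : Hsp d₁ → ℝ) (hfm : Measurable f)
    (hfb : ∃ C : ℝ, ∀ φ ∈ Metric.sphere (0 : Hsp d₁) 1, |f φ| ≤ C) :
    {ψ : Hsp2 d₁ d₂ | ψ ∈ Rset d₁ d₂ ρ₁ ∧
        |(∫ x, (if ‖x‖ < R then f (nrm x) * ‖x‖ ^ 2 else 0) ∂tildeMu ψ b) -
            ∫ x, (if ‖x‖ < R then f (nrm x) * ‖x‖ ^ 2 else 0) ∂gaussian ρ₁| <
          ε / (4 * R ^ 2) *
            supNorm (fun x : Hsp d₁ => if ‖x‖ < R then f (nrm x) * ‖x‖ ^ 2 else 0)} ∩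
    {ψ : Hsp2 d₁ d₂ | ψ ∈ Rset d₁ d₂ ρ₁ ∧
        |(∫ x, (if ‖x‖ < R then ‖x‖ ^ 2 else 0) ∂tildeMu ψ b) -
            ∫ x, (if ‖x‖ < R then ‖x‖ ^ 2 else 0) ∂gaussian ρ₁| <
          ε / (4 * R ^ 2) *
            supNorm (fun x : Hsp d₁ => if ‖x‖ < R then ‖x‖ ^ 2 else 0)} ⊆
    {ψ : Hsp2 d₁ d₂ | ψ ∈ Rset d₁ d₂ ρ₁ ∧
        |(∫ x, f x ∂condMeasure ψ b) - ∫ x, f x ∂GAPm ρ₁| < ε * sphereSup f} := by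
  classical
  rintro ψ ⟨⟨hmem, h1⟩, -, h2⟩
  obtain ⟨hψ1, hψred⟩ := hmem
  refine ⟨⟨hψ1, hψred⟩, ?_⟩
  have hpars : ∑ j : Fin d₂, ‖partialInner (b j) ψ‖ ^ 2 = 1 := by
    rw [sum_sq_norm_partialInner b hb ψ, hψ1, one_pow]
  have hd₂ : (0 : ℝ) < d₂ := by
    rcases Nat.eq_zero_or_pos d₂ with h0 | h0
    · exfalso; subst h0; simpa using hpars
    · exact_mod_cast h0
  have hsqd : 0 < Real.sqrt d₂ := Real.sqrt_pos.2 hd₂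
  set C := sphereSup f with hCdef
  have hC0 : 0 ≤ C := Real.iSup_nonneg fun _ => abs_nonneg _
  obtain ⟨C₀, hC₀⟩ := hfb
  have hCb : ∀ x : Hsp d₁, x ≠ 0 → |f (nrm x)| ≤ C := by
    intro x hx
    have hmem2 : nrm x ∈ Metric.sphere (0 : Hsp d₁) 1 := by
      rw [mem_sphere_iff_norm, sub_zero]; exact norm_nrm hx
    have hbdd : BddAbove (Set.range fun φ : Metric.sphere (0 : Hsp d₁) 1 => |f φ|) := by
      refine ⟨C₀, ?_⟩; rintro r ⟨φ, rfl⟩; exact hC₀ φ φ.2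
    exact le_ciSup hbdd (⟨nrm x, hmem2⟩ : Metric.sphere (0 : Hsp d₁) 1)
  set gf : Hsp d₁ → ℝ := fun x => if ‖x‖ < R then f (nrm x) * ‖x‖ ^ 2 else 0 with hgf
  set g1 : Hsp d₁ → ℝ := fun x => if ‖x‖ < R then ‖x‖ ^ 2 else 0 with hg1
  have hmeas_gf : Measurable gf := Measurable.ite
    (measurableSet_lt measurable_norm measurable_const)
    ((hfm.comp measurable_nrm).mul (measurable_norm.pow_const 2)) measurable_const
  have hmeas_g1 : Measurable g1 := Measurable.ite
    (measurableSet_lt measurable_norm measurable_const)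
    (measurable_norm.pow_const 2) measurable_const
  have hgf_bd : ∀ x : Hsp d₁, |gf x| ≤ C * R ^ 2 := by
    intro x
    have hCR : 0 ≤ C * R ^ 2 := mul_nonneg hC0 (by positivity)
    rw [hgf]
    by_cases hx : ‖x‖ < R
    · simp only [if_pos hx]
      rcases eq_or_ne x 0 with rfl | hx0
      · simpa using hCR
      · rw [abs_mul, abs_of_nonneg (by positivity : (0:ℝ) ≤ ‖x‖ ^ 2)]
        have hb1 := hCb x hx0
        have hb2 : ‖x‖ ^ 2 ≤ R ^ 2 := by nlinarith [norm_nonneg x]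
        nlinarith [abs_nonneg (f (nrm x)), norm_nonneg x, sq_nonneg ‖x‖]
    · simpa only [if_neg hx, abs_zero] using hCR
  have hg1_bd : ∀ x : Hsp d₁, |g1 x| ≤ R ^ 2 := by
    intro x
    rw [hg1]
    by_cases hx : ‖x‖ < R
    · simp only [if_pos hx]
      rw [abs_of_nonneg (by positivity : (0:ℝ) ≤ ‖x‖ ^ 2)]
      nlinarith [norm_nonneg x]
    · simp only [if_neg hx, abs_zero]; positivity
  have hs1 : supNorm gf ≤ C * R ^ 2 := by unfold supNorm; exact ciSup_le hgf_bd
  have hs2 : supNorm g1 ≤ R ^ 2 := by unfold supNorm; exact ciSup_le hg1_bd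
  have hεR : 0 < ε / (4 * R ^ 2) := by positivity
  have hs1pos : 0 < supNorm gf := by
    by_contra hcon
    push_neg at hcon
    have hle : ε / (4 * R ^ 2) * supNorm gf ≤ 0 := mul_nonpos_of_nonneg_of_nonpos hεR.le hcon
    have := abs_nonneg ((∫ x, gf x ∂tildeMu ψ b) - ∫ x, gf x ∂gaussian ρ₁)
    linarith [h1]
  have hCpos : 0 < C := by nlinarith [hs1, hs1pos, sq_nonneg R, mul_pos hR0 hR0]
  -- computations for tildeMu
  have hscal : ∀ j : Fin d₂, ‖Real.sqrt d₂ • partialInner (b j) ψ‖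
      = Real.sqrt d₂ * ‖partialInner (b j) ψ‖ := fun j => by
    rw [norm_smul, Real.norm_eq_abs, abs_of_nonneg (Real.sqrt_nonneg _)]
  have egf : ∀ j : Fin d₂, gf (Real.sqrt d₂ • partialInner (b j) ψ)
      = (d₂ : ℝ) * (if Real.sqrt d₂ * ‖partialInner (b j) ψ‖ < R then
          f (nrm (partialInner (b j) ψ)) * ‖partialInner (b j) ψ‖ ^ 2 else 0) := by
    intro j
    rw [hgf]
    simp only
    rw [hscal j, nrm_smul hsqd]
    split_ifs with hcond
    · rw [mul_pow, Real.sq_sqrt hd₂.le]; ring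
    · ring
  have eg1 : ∀ j : Fin d₂, g1 (Real.sqrt d₂ • partialInner (b j) ψ)
      = (d₂ : ℝ) * (if Real.sqrt d₂ * ‖partialInner (b j) ψ‖ < R then
          ‖partialInner (b j) ψ‖ ^ 2 else 0) := by
    intro j
    rw [hg1]
    simp only
    rw [hscal j]
    split_ifs with hcond
    · rw [mul_pow, Real.sq_sqrt hd₂.le]
    · ring
  have hAf : ∫ x, gf x ∂tildeMu ψ b
      = ∑ j : Fin d₂, (if Real.sqrt d₂ * ‖partialInner (b j) ψ‖ < R then
          f (nrm (partialInner (b j) ψ)) * ‖partialInner (b j) ψ‖ ^ 2 else 0) := by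
    rw [integral_tildeMu ψ b gf, Finset.sum_congr rfl fun j _ => egf j, ← Finset.mul_sum,
      ← mul_assoc, inv_mul_cancel₀ (by positivity : (d₂ : ℝ) ≠ 0), one_mul]
  have hA1 : ∫ x, g1 x ∂tildeMu ψ b
      = ∑ j : Fin d₂, (if Real.sqrt d₂ * ‖partialInner (b j) ψ‖ < R then
          ‖partialInner (b j) ψ‖ ^ 2 else 0) := by
    rw [integral_tildeMu ψ b g1, Finset.sum_congr rfl fun j _ => eg1 j, ← Finset.mul_sum,
      ← mul_assoc, inv_mul_cancel₀ (by positivity : (d₂ : ℝ) ≠ 0), one_mul]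
  -- E1 : conditional measure vs tildeMu
  have hE1 : |(∫ x, f x ∂condMeasure ψ b) - ∫ x, gf x ∂tildeMu ψ b|
      ≤ C * (1 - ∫ x, g1 x ∂tildeMu ψ b) := by
    rw [integral_condMeasure ψ b f, hAf, hA1, ← Finset.sum_sub_distrib]
    calc |∑ j : Fin d₂, (‖partialInner (b j) ψ‖ ^ 2 * f (nrm (partialInner (b j) ψ))
            - (if Real.sqrt d₂ * ‖partialInner (b j) ψ‖ < R then
                f (nrm (partialInner (b j) ψ)) * ‖partialInner (b j) ψ‖ ^ 2 else 0))|
        ≤ ∑ j : Fin d₂, |‖partialInner (b j) ψ‖ ^ 2 * f (nrm (partialInner (b j) ψ))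
            - (if Real.sqrt d₂ * ‖partialInner (b j) ψ‖ < R then
                f (nrm (partialInner (b j) ψ)) * ‖partialInner (b j) ψ‖ ^ 2 else 0)| :=
          Finset.abs_sum_le_sum_abs _ _
      _ ≤ ∑ j : Fin d₂, C * (‖partialInner (b j) ψ‖ ^ 2
            - (if Real.sqrt d₂ * ‖partialInner (b j) ψ‖ < R then
                ‖partialInner (b j) ψ‖ ^ 2 else 0)) := by
          refine Finset.sum_le_sum fun j _ => ?_
          split_ifs with hc
          · rw [mul_comm, sub_self, abs_zero, sub_self, mul_zero]
          · rw [sub_zero, sub_zero]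
            rcases eq_or_ne (partialInner (b j) ψ) 0 with h0 | h0
            · simp [h0]
            · rw [abs_mul, abs_of_nonneg (by positivity : (0:ℝ) ≤ ‖partialInner (b j) ψ‖ ^ 2)]
              have := hCb (partialInner (b j) ψ) h0
              nlinarith [sq_nonneg ‖partialInner (b j) ψ‖]
      _ = C * (1 - ∑ j : Fin d₂, (if Real.sqrt d₂ * ‖partialInner (b j) ψ‖ < R then
            ‖partialInner (b j) ψ‖ ^ 2 else 0)) := by
          rw [← Finset.mul_sum, Finset.sum_sub_distrib, hpars]
  -- gaussian side
  have hpos := hρ₁.1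
  haveI : IsProbabilityMeasure (gaussian ρ₁) := gaussian_prob hpos
  have hmom : ∫ x, ‖x‖ ^ 2 ∂gaussian ρ₁ = 1 := by
    rw [gaussian_second_moment hpos, hρ₁.2]; simp
  have hint2 : Integrable (fun x : Hsp d₁ => ‖x‖ ^ 2) (gaussian ρ₁) :=
    gaussian_int_norm_sq hpos
  have hintfn : Integrable (fun x : Hsp d₁ => f (nrm x) * ‖x‖ ^ 2) (gaussian ρ₁) := by
    refine Integrable.mono' (hint2.const_mul C)
      ((hfm.comp measurable_nrm).mul (measurable_norm.pow_const 2)).aestronglyMeasurable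
      (Filter.Eventually.of_forall fun x => ?_)
    rcases eq_or_ne x 0 with rfl | hx0
    · simp
    · rw [Real.norm_eq_abs, abs_mul, abs_of_nonneg (by positivity : (0:ℝ) ≤ ‖x‖ ^ 2)]
      exact mul_le_mul_of_nonneg_right (hCb x hx0) (by positivity)
  have hintgf : Integrable gf (gaussian ρ₁) := by
    refine Integrable.mono' (integrable_const (C * R ^ 2)) hmeas_gf.aestronglyMeasurable
      (Filter.Eventually.of_forall fun x => ?_)
    rw [Real.norm_eq_abs]; exact hgf_bd x
  have hintg1 : Integrable g1 (gaussian ρ₁) := by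
    refine Integrable.mono' (integrable_const (R ^ 2)) hmeas_g1.aestronglyMeasurable
      (Filter.Eventually.of_forall fun x => ?_)
    rw [Real.norm_eq_abs]; exact hg1_bd x
  have hGP : ∫ x, f x ∂GAPm ρ₁ = ∫ x, f (nrm x) * ‖x‖ ^ 2 ∂gaussian ρ₁ :=
    integral_GAPm ρ₁ f hfm
  have hE3 : |(∫ x, f x ∂GAPm ρ₁) - ∫ x, gf x ∂gaussian ρ₁|
      ≤ C * (1 - ∫ x, g1 x ∂gaussian ρ₁) := by
    rw [hGP, ← integral_sub hintfn hintgf]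
    have hC1 : C * (1 - ∫ x, g1 x ∂gaussian ρ₁)
        = ∫ x, C * (‖x‖ ^ 2 - g1 x) ∂gaussian ρ₁ := by
      rw [integral_const_mul, integral_sub hint2 hintg1, hmom]
    rw [hC1]
    have habs : |∫ x, (f (nrm x) * ‖x‖ ^ 2 - gf x) ∂gaussian ρ₁|
        ≤ ∫ x, |f (nrm x) * ‖x‖ ^ 2 - gf x| ∂gaussian ρ₁ := by
      simpa [Real.norm_eq_abs] using norm_integral_le_integral_norm
        (μ := gaussian ρ₁) (f := fun x => f (nrm x) * ‖x‖ ^ 2 - gf x)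
    refine habs.trans (integral_mono ((hintfn.sub hintgf).abs)
      ((hint2.sub hintg1).const_mul C) fun x => ?_)
    rw [hgf, hg1]
    simp only
    by_cases hx : ‖x‖ < R
    · simp [hx]
    · simp only [if_neg hx, sub_zero]
      rcases eq_or_ne x 0 with rfl | hx0
      · simp
      · rw [abs_mul, abs_of_nonneg (by positivity : (0:ℝ) ≤ ‖x‖ ^ 2)]
        exact mul_le_mul_of_nonneg_right (hCb x hx0) (by positivity)
  have hB1 : 1 - ∫ x, g1 x ∂gaussian ρ₁ < ε / 4 := by
    have hindic : ∫ x, g1 x ∂gaussian ρ₁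
        = ∫ x in {x : Hsp d₁ | ‖x‖ < R}, ‖x‖ ^ 2 ∂gaussian ρ₁ := by
      rw [← integral_indicator (measurableSet_lt measurable_norm measurable_const)]
      refine integral_congr_ae (Filter.Eventually.of_forall fun x => ?_)
      rw [hg1]
      simp [Set.indicator_apply, Set.mem_setOf_eq]
    rw [hindic]
    linarith [hR ρ₁ hρ₁]
  -- final arithmetic
  have hA1le : 1 - ∫ x, g1 x ∂tildeMu ψ b < ε / 2 := by
    have t9 : (∫ x, g1 x ∂gaussian ρ₁) - (∫ x, g1 x ∂tildeMu ψ b)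
        ≤ |(∫ x, g1 x ∂tildeMu ψ b) - ∫ x, g1 x ∂gaussian ρ₁| := by
      rw [abs_sub_comm]; exact le_abs_self _
    have t6 : ε / (4 * R ^ 2) * supNorm g1 ≤ ε / 4 := by
      have hmm := mul_le_mul_of_nonneg_left hs2 hεR.le
      have heq : ε / (4 * R ^ 2) * R ^ 2 = ε / 4 := by field_simp
      linarith
    linarith [h2, hB1, t9]
  have t7 : ε / (4 * R ^ 2) * supNorm gf ≤ C * (ε / 4) := by
    have hmm := mul_le_mul_of_nonneg_left hs1 hεR.le
    have heq : ε / (4 * R ^ 2) * (C * R ^ 2) = C * (ε / 4) := by field_simp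
    linarith
  have tri : |(∫ x, f x ∂condMeasure ψ b) - ∫ x, f x ∂GAPm ρ₁|
      ≤ |(∫ x, f x ∂condMeasure ψ b) - ∫ x, gf x ∂tildeMu ψ b|
        + |(∫ x, gf x ∂tildeMu ψ b) - ∫ x, gf x ∂gaussian ρ₁|
        + |(∫ x, f x ∂GAPm ρ₁) - ∫ x, gf x ∂gaussian ρ₁| := by
    have habc := abs_sub_le (∫ x, f x ∂condMeasure ψ b) (∫ x, gf x ∂tildeMu ψ b)
      (∫ x, f x ∂GAPm ρ₁)
    have habc2 := abs_sub_le (∫ x, gf x ∂tildeMu ψ b) (∫ x, gf x ∂gaussian ρ₁)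
      (∫ x, f x ∂GAPm ρ₁)
    have hcomm : |(∫ x, gf x ∂gaussian ρ₁) - ∫ x, f x ∂GAPm ρ₁|
        = |(∫ x, f x ∂GAPm ρ₁) - ∫ x, gf x ∂gaussian ρ₁| := abs_sub_comm _ _
    linarith
  have hmul1 : C * (1 - ∫ x, g1 x ∂tildeMu ψ b) ≤ C * (ε / 2) :=
    mul_le_mul_of_nonneg_left hA1le.le hC0
  have hmul2 : C * (1 - ∫ x, g1 x ∂gaussian ρ₁) ≤ C * (ε / 4) :=
    mul_le_mul_of_nonneg_left hB1.le hC0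
  have hstrict : |(∫ x, gf x ∂tildeMu ψ b) - ∫ x, gf x ∂gaussian ρ₁| < C * (ε / 4) :=
    lt_of_lt_of_le h1 t7
  have hfinal : |(∫ x, f x ∂condMeasure ψ b) - ∫ x, f x ∂GAPm ρ₁| < ε * C := by
    linarith
  exact hfinal


end GAPPaper
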